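/- Let R be any system of random variables and R‡ its consistification (using the unique multimaximal couplings of the connections of R as the new bunches). Then R has a multimaximally connected coupling if and only if R‡ has an identically connected coupling; that is, R is noncontextual in the Contextuality-by-Default sense if and only if R‡ is noncontextual. -/

import Mathlib

/-!
For `±1` variables a multimaximal coupling of a connection is comonotone: every pair of its
coordinates has the maximally agreeing joint law, with agreement `1 - |p - p'|`. Such a law is
unique, since it lives on sign patterns monotone along the marginals `p`, and each of those is
pinned down by two coordinates. Gluing a coupling of `R` to the bunch of `c'` along the optimal
joint law of `(q, c)` and `(q, c')` shows that couplings of `R` reach agreement `1 - |p - p'|`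
as well, so a multimaximally connected coupling restricts on each connection to `T_q`; copying
every `(q, c)` into both new contexts then gives an identically connected coupling of `R‡`.
Conversely, forgetting the copies in an identically connected coupling of `R‡` yields a
coupling of `R` whose agreements are those of the `T_q`, which are maximal.
-/

abbrev Sgn : Type := ({-1, 1} : Finset ℤ)

def one : Sgn := ⟨1, by decide⟩

structure FDist (X : Type) [Fintype X] where
  m : X → ℝ
  nonneg : ∀ x, 0 ≤ m x
  total : ∑ x, m x = 1

def push {X Y : Type} [Fintype X] [DecidableEq Y] (p : X → ℝ) (f : X → Y) : Y → ℝ :=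
  fun y => ∑ x, if f x = y then p x else 0

section Systems

variable {Q C : Type} [Fintype Q] [Fintype C] [DecidableEq Q] [DecidableEq C]

abbrev Glob (pre : Q → C → Bool) : Type := {qc : Q × C // pre qc.1 qc.2}

def restr (pre : Q → C → Bool) (c : C) (f : Glob pre → Sgn) : {q : Q // pre q c} → Sgn :=
  fun q => f ⟨(q.1, c), q.2⟩

variable (pre : Q → C → Bool) (R : (c : C) → FDist ({q : Q // pre q c} → Sgn))

def IsCoupling (T : FDist (Glob pre → Sgn)) : Prop :=
  ∀ c : C, push T.m (restr pre c) = (R c).m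

def marg (c : C) (q : Q) (h : pre q c) : Sgn → ℝ :=
  push (R c).m (fun f => f ⟨q, h⟩)

def SimplyCC : Prop :=
  ∀ (q : Q) (c c' : C) (h : pre q c) (h' : pre q c'), marg pre R c q h = marg pre R c' q h'

def StronglyCC : Prop :=
  ∀ c c' : C,
    push (R c).m (fun f (q : {q : Q // pre q c ∧ pre q c'}) => f ⟨q.1, q.2.1⟩)
    = push (R c').m (fun f (q : {q : Q // pre q c ∧ pre q c'}) => f ⟨q.1, q.2.2⟩)

def prAgree (T : FDist (Glob pre → Sgn)) (q : Q) (c c' : C) (h : pre q c) (h' : pre q c') : ℝ :=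
  ∑ f, if f ⟨(q, c), h⟩ = f ⟨(q, c'), h'⟩ then T.m f else 0

def IdConn (T : FDist (Glob pre → Sgn)) : Prop :=
  ∀ (q : Q) (c c' : C) (h : pre q c) (h' : pre q c'), prAgree pre T q c c' h h' = 1

def IsAlphaCoupling (s : (Glob pre → Sgn) → ℝ) (α : ℝ) : Prop :=
  (∀ f, 0 ≤ s f) ∧ (∑ f, s f = α) ∧
  ∀ (c : C) (g : {q : Q // pre q c} → Sgn), push s (restr pre c) g ≤ (R c).m g

def IdConnSub (s : (Glob pre → Sgn) → ℝ) : Prop :=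
  ∀ (q : Q) (c c' : C) (h : pre q c) (h' : pre q c'),
    (∑ f, if f ⟨(q, c), h⟩ ≠ f ⟨(q, c'), h'⟩ then s f else 0) = 0

end Systems

section Consistification

variable {Q C : Type} [Fintype Q] [Fintype C] [DecidableEq Q] [DecidableEq C]

/-- The is-measured-in relation of the consistified system: the new contents are the
measured content–context pairs (q,c) of the old system; the new contexts are the old
contexts (inl c) and the old contents (inr q); the new content (q,c) is measured
exactly in the new contexts inl c and inr q. -/
def consPre (pre : Q → C → Bool) : Glob pre → C ⊕ Q → Bool
  | x, Sum.inl c => decide (x.1.2 = c)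
  | x, Sum.inr q => decide (x.1.1 = q)

/-- The old content of a new content measured in a new context inl c, seen as a
content of the old context c. -/
def oldOfCtx (pre : Q → C → Bool) (c : C)
    (x : {x : Glob pre // consPre pre x (Sum.inl c)}) : {q : Q // pre q c} :=
  ⟨x.1.1.1, by
    have hx := x.2
    simp only [consPre, decide_eq_true_eq] at hx
    have h := x.1.2
    rw [hx] at h
    exact h⟩

/-- The relabeling of a bunch of the old context c as a bunch of the new context
inl c. -/
def relabel (pre : Q → C → Bool) (c : C) (f : {q : Q // pre q c} → Sgn) :
    {x : Glob pre // consPre pre x (Sum.inl c)} → Sgn :=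
  fun x => f (oldOfCtx pre c x)

/-- The old context of a new content measured in a new context inr q, with proof that
it measures q. -/
def preOfConn (pre : Q → C → Bool) (q : Q)
    (x : {x : Glob pre // consPre pre x (Sum.inr q)}) : pre q x.1.1.2 := by
  have hx := x.2
  simp only [consPre, decide_eq_true_eq] at hx
  have h := x.1.2
  rw [hx] at h
  exact h

/-- The element of the connection-bunch domain corresponding to context c. -/
def connElem (pre : Q → C → Bool) (q : Q) (c : C) (h : pre q c) :
    {x : Glob pre // consPre pre x (Sum.inr q)} :=
  ⟨⟨(q, c), h⟩, by simp [consPre]⟩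

end Consistification

/-- A coupling is multimaximally connected if for each content q and contexts c, c'
measuring it, the probability that the (q,c)- and (q,c')-coordinates agree is maximal
among all couplings of the system; the system is noncontextual (in the CbD sense) if
such a coupling exists. -/
def MultimaxConn {Q C : Type} [Fintype Q] [Fintype C] [DecidableEq Q] [DecidableEq C]
    (pre : Q → C → Bool) (R : (c : C) → FDist ({q : Q // pre q c} → Sgn))
    (T : FDist (Glob pre → Sgn)) : Prop :=
  IsCoupling pre R T ∧
  ∀ (q : Q) (c c' : C) (h : pre q c) (h' : pre q c'),
    ∀ T' : FDist (Glob pre → Sgn), IsCoupling pre R T' →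
      prAgree pre T' q c c' h h' ≤ prAgree pre T q c c' h h'

open Finset

def negOne : Sgn := ⟨-1, by decide⟩

lemma negOne_ne_one : negOne ≠ one := by decide

lemma sgn_eq_negOne_or_one (s : Sgn) : s = negOne ∨ s = one := by
  rcases s with ⟨v, hv⟩
  simp only [Finset.mem_insert, Finset.mem_singleton] at hv
  rcases hv with rfl | rfl
  exacts [Or.inl rfl, Or.inr rfl]

lemma sum_sgn (F : Sgn → ℝ) : ∑ s, F s = F negOne + F one := by
  rw [show (univ : Finset Sgn) = {negOne, one} by decide, sum_pair negOne_ne_one]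

lemma sum_sgn_prod (F : Sgn × Sgn → ℝ) :
    ∑ st, F st = F (one, one) + F (one, negOne) + F (negOne, one) + F (negOne, negOne) := by
  rw [Fintype.sum_prod_type, sum_sgn, sum_sgn, sum_sgn]
  ring

lemma sum_diag_sgn (J : Sgn × Sgn → ℝ) :
    ∑ st, (if st.1 = st.2 then J st else 0) = J (one, one) + J (negOne, negOne) := by
  rw [sum_sgn_prod]
  simp [negOne_ne_one, negOne_ne_one.symm]

section Push

variable {X Y Z : Type} [Fintype X] [DecidableEq Y] [DecidableEq Z]

lemma push_nonneg {p : X → ℝ} (hp : ∀ x, 0 ≤ p x) (f : X → Y) (y : Y) : 0 ≤ push p f y :=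
  sum_nonneg fun x _ => by split_ifs <;> simp [hp x]

lemma sum_mul_push [Fintype Y] (p : X → ℝ) (f : X → Y) (F : Y → ℝ) :
    ∑ y, F y * push p f y = ∑ x, F (f x) * p x := by
  simp only [push, mul_sum, mul_ite, mul_zero]
  rw [sum_comm]
  simp

lemma sum_ite_push [Fintype Y] (p : X → ℝ) (f : X → Y) (φ : Y → Prop) [DecidablePred φ] :
    ∑ y, (if φ y then push p f y else 0) = ∑ x, if φ (f x) then p x else 0 := by
  simpa only [boole_mul] using sum_mul_push p f (fun y => if φ y then 1 else 0)

lemma sum_push [Fintype Y] (p : X → ℝ) (f : X → Y) : ∑ y, push p f y = ∑ x, p x := by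
  simpa using sum_mul_push p f 1

lemma push_comp [Fintype Y] (p : X → ℝ) (f : X → Y) (g : Y → Z) :
    push (push p f) g = push p (g ∘ f) := by
  funext z
  exact sum_ite_push p f (g · = z)

lemma push_id [DecidableEq X] (p : X → ℝ) : push p id = p := by
  funext x
  simp [push]

lemma le_push {p : X → ℝ} (hp : ∀ x, 0 ≤ p x) (f : X → Y) (x : X) : p x ≤ push p f (f x) := by
  have := single_le_sum (f := fun x' => if f x' = f x then p x' else 0)
    (fun x' _ => by split_ifs <;> simp [hp x']) (mem_univ x)
  simpa [push] using this

lemma push_fst_apply {A B : Type} [Fintype A] [Fintype B] [DecidableEq A] (κ : A × B → ℝ)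
    (a : A) : push κ Prod.fst a = ∑ b, κ (a, b) := by
  simp only [push, Fintype.sum_prod_type]
  rw [sum_eq_single a] <;> simp +contextual

lemma push_snd_apply {A B : Type} [Fintype A] [Fintype B] [DecidableEq B] (κ : A × B → ℝ)
    (b : B) : push κ Prod.snd b = ∑ a, κ (a, b) := by
  simp only [push, Fintype.sum_prod_type]
  exact sum_congr rfl fun a _ => by rw [sum_eq_single b] <;> simp +contextual

end Push

lemma FDist.push_sgn {X : Type} [Fintype X] (m : FDist X) (f : X → Sgn) (s : Sgn) :
    push m.m f s = if s = one then push m.m f one else 1 - push m.m f one := by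
  have htot := sum_push m.m f
  rw [sum_sgn, m.total] at htot
  rcases sgn_eq_negOne_or_one s with rfl | rfl
  · simp only [negOne_ne_one, if_false]
    linarith
  · simp

lemma FDist.push_le_one {X Y : Type} [Fintype X] [Fintype Y] [DecidableEq Y] (m : FDist X)
    (f : X → Y) (y : Y) : push m.m f y ≤ 1 := by
  rw [← m.total, ← sum_push m.m f]
  exact single_le_sum (fun y _ => push_nonneg m.nonneg f y) (mem_univ y)

def FDist.map {X Y : Type} [Fintype X] [Fintype Y] [DecidableEq Y] (m : FDist X) (f : X → Y) :
    FDist Y :=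
  ⟨push m.m f, push_nonneg m.nonneg f, by rw [sum_push, m.total]⟩

/-- The maximally agreeing joint law of two `±1` variables with `P(· = one)` equal to `a`, `b`. -/
noncomputable def bernCoupling (a b : ℝ) (st : Sgn × Sgn) : ℝ :=
  if st.1 = one then (if st.2 = one then min a b else a - min a b)
  else (if st.2 = one then b - min a b else 1 - max a b)

section BernCoupling

variable {a b : ℝ}

lemma bernCoupling_nonneg (ha₀ : 0 ≤ a) (ha₁ : a ≤ 1) (hb₀ : 0 ≤ b) (hb₁ : b ≤ 1)
    (st : Sgn × Sgn) : 0 ≤ bernCoupling a b st := by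
  unfold bernCoupling
  split_ifs
  · exact le_min ha₀ hb₀
  · linarith [min_le_left a b]
  · linarith [min_le_right a b]
  · linarith [max_le ha₁ hb₁]

lemma push_bernCoupling_fst (s : Sgn) :
    push (bernCoupling a b) Prod.fst s = if s = one then a else 1 - a := by
  rcases sgn_eq_negOne_or_one s with rfl | rfl
  · simp [push, sum_sgn_prod, bernCoupling, negOne_ne_one, negOne_ne_one.symm]
    linarith [min_add_max a b]
  · simp [push, sum_sgn_prod, bernCoupling, negOne_ne_one]

lemma push_bernCoupling_snd (t : Sgn) :
    push (bernCoupling a b) Prod.snd t = if t = one then b else 1 - b := by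
  rcases sgn_eq_negOne_or_one t with rfl | rfl
  · simp [push, sum_sgn_prod, bernCoupling, negOne_ne_one, negOne_ne_one.symm]
    linarith [min_add_max a b]
  · simp [push, sum_sgn_prod, bernCoupling, negOne_ne_one]

lemma bernCoupling_diag : bernCoupling a b (one, one) + bernCoupling a b (negOne, negOne) =
    1 - |a - b| := by
  simp only [bernCoupling, if_true, negOne_ne_one, if_false, ← max_sub_min_eq_abs']
  ring

lemma eq_bernCoupling_of_le_diag {J : Sgn × Sgn → ℝ} (hJ : ∀ st, 0 ≤ J st) (htot : ∑ st, J st = 1)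
    (ha : push J Prod.fst one = a) (hb : push J Prod.snd one = b)
    (hdiag : 1 - |a - b| ≤ J (one, one) + J (negOne, negOne)) : J = bernCoupling a b := by
  simp only [push, sum_sgn_prod, negOne_ne_one, if_true, if_false, add_zero] at ha hb
  rw [sum_sgn_prod] at htot
  have h₁ := hJ (one, negOne)
  have h₂ := hJ (negOne, one)
  funext ⟨s, t⟩
  rcases le_total a b with hab | hab
  · rw [abs_of_nonpos (by linarith)] at hdiag
    rcases sgn_eq_negOne_or_one s with rfl | rfl <;>
      rcases sgn_eq_negOne_or_one t with rfl | rfl <;>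
      simp [bernCoupling, negOne_ne_one, min_eq_left hab, max_eq_right hab] <;> linarith
  · rw [abs_of_nonneg (by linarith)] at hdiag
    rcases sgn_eq_negOne_or_one s with rfl | rfl <;>
      rcases sgn_eq_negOne_or_one t with rfl | rfl <;>
      simp [bernCoupling, negOne_ne_one, min_eq_right hab, max_eq_left hab] <;> linarith

end BernCoupling

section MonotoneAlong

variable {I : Type} [Fintype I]

def IsMonotoneAlong (p : I → ℝ) (g : I → Sgn) : Prop :=
  ∀ i j, p i ≤ p j → g i = one → g j = one

lemma exists_min_on [Nonempty I] (P : I → Prop) (p : I → ℝ) :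
    ∃ i₀, ∀ i, P i → P i₀ ∧ p i₀ ≤ p i := by
  classical
  by_cases h : ∃ i, P i
  · obtain ⟨i, hi⟩ := h
    obtain ⟨i₀, hi₀, hmin⟩ := (univ.filter P).exists_min_image p ⟨i, by simpa using hi⟩
    exact ⟨i₀, fun i hi => ⟨(mem_filter.1 hi₀).2, hmin i (by simpa using hi)⟩⟩
  · exact ⟨Classical.arbitrary I, fun i hi => (h ⟨i, hi⟩).elim⟩

/-- A sign pattern monotone along `p` is determined by its values at two coordinates: the
lowest coordinate where `g` is `one` and the highest one where it is `negOne`. -/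
lemma exists_pair_determines [Nonempty I] (p : I → ℝ) (g : I → Sgn) :
    ∃ i₀ j₀, ∀ h, IsMonotoneAlong p h → h i₀ = g i₀ → h j₀ = g j₀ → h = g := by
  obtain ⟨i₀, hi₀⟩ := exists_min_on (g · = one) p
  obtain ⟨j₀, hj₀⟩ := exists_min_on (g · = negOne) (-p)
  refine ⟨i₀, j₀, fun h hmono hhi hhj => funext fun i => ?_⟩
  rcases sgn_eq_negOne_or_one (g i) with hi | hi
  · obtain ⟨hgj₀, hle⟩ := hj₀ i hi
    rcases sgn_eq_negOne_or_one (h i) with hhi' | hhi'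
    · rw [hhi', hi]
    · have := hmono i j₀ (by simpa using hle) hhi'
      exact absurd (hhj.symm.trans this) (hgj₀ ▸ negOne_ne_one)
  · obtain ⟨hgi₀, hle⟩ := hi₀ i hi
    rw [hi, hmono i₀ i hle (hhi.trans hgi₀)]

end MonotoneAlong

section Comonotone

variable {I : Type} [Fintype I] [DecidableEq I]

def probOne (m : (I → Sgn) → ℝ) (i : I) : ℝ := push m (fun g => g i) one

def pairLaw (m : (I → Sgn) → ℝ) (i j : I) : Sgn × Sgn → ℝ := push m (fun g => (g i, g j))

def agree (m : (I → Sgn) → ℝ) (i j : I) : ℝ := ∑ g, if g i = g j then m g else 0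

/-- For `±1` variables these are exactly the multimaximal couplings. -/
def IsComonotone (m : FDist (I → Sgn)) : Prop :=
  ∀ i j, pairLaw m.m i j = bernCoupling (probOne m.m i) (probOne m.m j)

lemma agree_eq_pairLaw (m : (I → Sgn) → ℝ) (i j : I) :
    agree m i j = pairLaw m i j (one, one) + pairLaw m i j (negOne, negOne) := by
  rw [pairLaw, ← sum_diag_sgn, sum_ite_push]
  rfl

lemma isComonotone_of_le_agree (m : FDist (I → Sgn))
    (h : ∀ i j, 1 - |probOne m.m i - probOne m.m j| ≤ agree m.m i j) : IsComonotone m :=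
  fun i j => eq_bernCoupling_of_le_diag (push_nonneg m.nonneg _)
    (by rw [pairLaw, sum_push, m.total])
    (by rw [pairLaw, push_comp]; rfl) (by rw [pairLaw, push_comp]; rfl)
    (agree_eq_pairLaw m.m i j ▸ h i j)

lemma IsComonotone.isMonotoneAlong {m : FDist (I → Sgn)} (hm : IsComonotone m) {g : I → Sgn}
    (hg : m.m g ≠ 0) : IsMonotoneAlong (probOne m.m) g := by
  intro i j hij hi
  have h₀ : pairLaw m.m i j (one, negOne) = 0 := by
    rw [hm i j]
    simp [bernCoupling, negOne_ne_one, min_eq_left hij]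
  by_contra hj
  have hj' : g j = negOne := (sgn_eq_negOne_or_one _).resolve_right hj
  have := (sum_eq_zero_iff_of_nonneg fun g _ => by split_ifs <;> simp [m.nonneg g]).1 h₀ g
    (mem_univ g)
  simp [hi, hj'] at this
  exact hg this

lemma IsComonotone.apply_eq {m : FDist (I → Sgn)} (hm : IsComonotone m) {g : I → Sgn}
    {i₀ j₀ : I} (hg : ∀ h, IsMonotoneAlong (probOne m.m) h → h i₀ = g i₀ → h j₀ = g j₀ → h = g) :
    m.m g = bernCoupling (probOne m.m i₀) (probOne m.m j₀) (g i₀, g j₀) := by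
  rw [← hm i₀ j₀]
  calc m.m g = ∑ h, if h = g then m.m h else 0 := by simp
    _ = ∑ h, if (h i₀, h j₀) = (g i₀, g j₀) then m.m h else 0 := by
      refine sum_congr rfl fun h _ => ?_
      by_cases h₀ : m.m h = 0
      · simp [h₀]
      refine if_congr ⟨fun e => e ▸ rfl, fun e => ?_⟩ rfl rfl
      exact hg h (hm.isMonotoneAlong h₀) (Prod.mk.inj e).1 (Prod.mk.inj e).2

theorem IsComonotone.ext {m₁ m₂ : FDist (I → Sgn)} (h₁ : IsComonotone m₁)
    (h₂ : IsComonotone m₂) (h : probOne m₁.m = probOne m₂.m) : m₁.m = m₂.m := by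
  funext g
  cases isEmpty_or_nonempty I
  · have := m₁.total.trans m₂.total.symm
    rwa [Fintype.sum_subsingleton _ g, Fintype.sum_subsingleton _ g] at this
  obtain ⟨i₀, j₀, hg⟩ := exists_pair_determines (probOne m₁.m) g
  rw [h₁.apply_eq hg, h₂.apply_eq (h ▸ hg), h]

end Comonotone

section Glue

variable {X Y A B : Type} [Fintype X] [Fintype Y] [DecidableEq A] [DecidableEq B]

/-- Draw `(α x, β y)` from `κ`, then `x` and `y` independently from their conditional laws.
Division by a zero fibre mass yields `0`, which is the right value there. -/
noncomputable def glueDensity (μ : X → ℝ) (ν : Y → ℝ) (α : X → A) (β : Y → B) (κ : A × B → ℝ)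
    (xy : X × Y) : ℝ :=
  κ (α xy.1, β xy.2) * μ xy.1 * ν xy.2 / (push μ α (α xy.1) * push ν β (β xy.2))

variable {μ : X → ℝ} {ν : Y → ℝ} {α : X → A} {β : Y → B} {κ : A × B → ℝ}

lemma glueDensity_swap (x : X) (y : Y) :
    glueDensity μ ν α β κ (x, y) = glueDensity ν μ β α (κ ∘ Prod.swap) (y, x) := by
  simp only [glueDensity, Function.comp, Prod.swap]
  ring

lemma sum_glueDensity_snd [Fintype A] [Fintype B] (hμ : ∀ x, 0 ≤ μ x) (hκ : ∀ st, 0 ≤ κ st)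
    (hκα : push κ Prod.fst = push μ α) (hκβ : push κ Prod.snd = push ν β) (x : X) :
    ∑ y, glueDensity μ ν α β κ (x, y) = μ x := by
  have hκt : ∀ t, push ν β t = 0 → κ (α x, t) = 0 := fun t ht =>
    le_antisymm (ht ▸ hκβ ▸ le_push hκ Prod.snd (α x, t)) (hκ _)
  have hμx : push μ α (α x) = 0 → μ x = 0 := fun h =>
    le_antisymm (h ▸ le_push hμ α x) (hμ x)
  calc ∑ y, glueDensity μ ν α β κ (x, y)
      = μ x / push μ α (α x) * ∑ y, κ (α x, β y) / push ν β (β y) * ν y := by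
        rw [mul_sum]
        exact sum_congr rfl fun y _ => by simp only [glueDensity]; ring
    _ = μ x / push μ α (α x) * ∑ t, κ (α x, t) / push ν β t * push ν β t := by
        rw [sum_mul_push ν β (fun t => κ (α x, t) / push ν β t)]
    _ = μ x / push μ α (α x) * push μ α (α x) := by
        have : ∑ t, κ (α x, t) / push ν β t * push ν β t = push μ α (α x) := by
          rw [← hκα, push_fst_apply]
          exact sum_congr rfl fun t _ => div_mul_cancel_of_imp (hκt t)
        rw [this]
    _ = μ x := div_mul_cancel_of_imp hμx

lemma push_glueDensity [Fintype A] [Fintype B] (hκ : ∀ st, 0 ≤ κ st)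
    (hκα : push κ Prod.fst = push μ α) (hκβ : push κ Prod.snd = push ν β) :
    push (glueDensity μ ν α β κ) (Prod.map α β) = κ := by
  funext ⟨s, t⟩
  have hκst : push μ α s * push ν β t = 0 → κ (s, t) = 0 := fun h => by
    rcases mul_eq_zero.1 h with h | h
    · exact le_antisymm (h ▸ hκα ▸ le_push hκ Prod.fst (s, t)) (hκ _)
    · exact le_antisymm (h ▸ hκβ ▸ le_push hκ Prod.snd (s, t)) (hκ _)
  calc push (glueDensity μ ν α β κ) (Prod.map α β) (s, t)
      = ∑ x, ∑ y, (if α x = s then μ x else 0) * (if β y = t then ν y else 0) *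
          (κ (s, t) / (push μ α s * push ν β t)) := by
        rw [push, Fintype.sum_prod_type]
        refine sum_congr rfl fun x _ => sum_congr rfl fun y _ => ?_
        by_cases hx : α x = s <;> by_cases hy : β y = t <;> simp [hx, hy, glueDensity]
        subst hx hy
        ring
    _ = push μ α s * push ν β t * (κ (s, t) / (push μ α s * push ν β t)) := by
        generalize κ (s, t) / (push μ α s * push ν β t) = c
        simp only [push, sum_mul, mul_sum]
        exact sum_comm
    _ = κ (s, t) := mul_div_cancel_of_imp' hκst

theorem exists_glue [Fintype A] [Fintype B] [DecidableEq X] [DecidableEq Y] (μ : FDist X)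
    (ν : FDist Y) (α : X → A) (β : Y → B) {κ : A × B → ℝ} (hκ : ∀ st, 0 ≤ κ st)
    (hκα : push κ Prod.fst = push μ.m α) (hκβ : push κ Prod.snd = push ν.m β) :
    ∃ G : FDist (X × Y), push G.m Prod.fst = μ.m ∧ push G.m Prod.snd = ν.m ∧
      push G.m (Prod.map α β) = κ := by
  have hκβ' : push (κ ∘ Prod.swap) Prod.fst = push ν.m β := by
    funext t
    rw [push_fst_apply, ← hκβ, push_snd_apply]
    rfl
  have hκα' : push (κ ∘ Prod.swap) Prod.snd = push μ.m α := by
    funext s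
    rw [push_snd_apply, ← hκα, push_fst_apply]
    rfl
  have hfst := sum_glueDensity_snd μ.nonneg hκ hκα hκβ
  have hsnd := sum_glueDensity_snd ν.nonneg (fun _ => hκ _) hκβ' hκα'
  refine ⟨⟨glueDensity μ.m ν.m α β κ, fun xy => ?_, ?_⟩, ?_, ?_, push_glueDensity hκ hκα hκβ⟩
  · exact div_nonneg (mul_nonneg (mul_nonneg (hκ _) (μ.nonneg _)) (ν.nonneg _))
      (mul_nonneg (push_nonneg μ.nonneg _ _) (push_nonneg ν.nonneg _ _))
  · rw [Fintype.sum_prod_type]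
    simp only [hfst, μ.total]
  · funext x
    rw [push_fst_apply, hfst]
  · funext y
    rw [push_snd_apply, ← hsnd y]
    exact sum_congr rfl fun x _ => glueDensity_swap x y

end Glue

section Overwrite

variable {Q C : Type} [DecidableEq C] {pre : Q → C → Bool}

def overwrite (pre : Q → C → Bool) (c : C) (f : Glob pre → Sgn) (g : {q : Q // pre q c} → Sgn) :
    Glob pre → Sgn :=
  fun z => if hz : z.1.2 = c then g ⟨z.1.1, hz ▸ z.2⟩ else f z

lemma restr_overwrite_self (c : C) (f : Glob pre → Sgn) (g : {q : Q // pre q c} → Sgn) :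
    restr pre c (overwrite pre c f g) = g := by
  funext q
  simp [restr, overwrite]

lemma restr_overwrite_of_ne {c₀ c : C} (hc : c₀ ≠ c) (f : Glob pre → Sgn)
    (g : {q : Q // pre q c} → Sgn) : restr pre c₀ (overwrite pre c f g) = restr pre c₀ f := by
  funext q
  simp [restr, overwrite, hc]

end Overwrite

section System

variable {Q C : Type} [Fintype Q] [Fintype C] [DecidableEq Q] [DecidableEq C]
  {pre : Q → C → Bool} {R : (c : C) → FDist ({q : Q // pre q c} → Sgn)}

lemma IsCoupling.push_apply {T : FDist (Glob pre → Sgn)} (hT : IsCoupling pre R T) {q : Q}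
    {c : C} (h : pre q c) : push T.m (fun f => f ⟨(q, c), h⟩) = marg pre R c q h := by
  rw [marg, ← hT c, push_comp]
  rfl

lemma IdConn.apply_eq {T : FDist (Glob pre → Sgn)} (hT : IdConn pre T) {f : Glob pre → Sgn}
    (hf : T.m f ≠ 0) {q : Q} {c c' : C} (h : pre q c) (h' : pre q c') :
    f ⟨(q, c), h⟩ = f ⟨(q, c'), h'⟩ := by
  have hdis : ∑ f, (T.m f - if f ⟨(q, c), h⟩ = f ⟨(q, c'), h'⟩ then T.m f else 0) = 0 := by
    rw [sum_sub_distrib, T.total]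
    exact sub_eq_zero.2 (hT q c c' h h').symm
  rw [sum_eq_zero_iff_of_nonneg fun f _ => by split_ifs <;> simp [T.nonneg f]] at hdis
  by_contra hne
  simpa [hne, hf] using hdis f (mem_univ f)

lemma IsCoupling.map_overwrite {T : FDist (Glob pre → Sgn)} (hT : IsCoupling pre R T) {c : C}
    (G : FDist ((Glob pre → Sgn) × ({q : Q // pre q c} → Sgn)))
    (hG₁ : push G.m Prod.fst = T.m) (hG₂ : push G.m Prod.snd = (R c).m) :
    IsCoupling pre R (G.map fun fg => overwrite pre c fg.1 fg.2) := by
  intro c₀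
  show push (push G.m _) _ = _
  rw [push_comp]
  by_cases hc : c₀ = c
  · subst hc
    simp only [Function.comp_def, restr_overwrite_self]
    exact hG₂
  · simp only [Function.comp_def, restr_overwrite_of_ne hc]
    rw [show (fun fg => restr pre c₀ fg.1) = restr pre c₀ ∘ Prod.fst from rfl, ← push_comp, hG₁,
      hT c₀]

lemma IsCoupling.exists_le_prAgree {T : FDist (Glob pre → Sgn)} (hT : IsCoupling pre R T)
    {q : Q} {c c' : C} (h : pre q c) (h' : pre q c') :
    ∃ T₂, IsCoupling pre R T₂ ∧
      1 - |marg pre R c q h one - marg pre R c' q h' one| ≤ prAgree pre T₂ q c c' h h' := by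
  by_cases hcc : c = c'
  · subst hcc
    refine ⟨T, hT, ?_⟩
    simp [prAgree, T.total]
  set a := marg pre R c q h one
  set b := marg pre R c' q h' one
  have hκ : ∀ st, 0 ≤ bernCoupling a b st :=
    bernCoupling_nonneg (push_nonneg (R c).nonneg _ _) ((R c).push_le_one _ _)
      (push_nonneg (R c').nonneg _ _) ((R c').push_le_one _ _)
  set α : (Glob pre → Sgn) → Sgn := fun f => f ⟨(q, c), h⟩
  set β : ({q : Q // pre q c'} → Sgn) → Sgn := fun g => g ⟨q, h'⟩
  have hκα : push (bernCoupling a b) Prod.fst = push T.m α := by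
    funext s
    rw [push_bernCoupling_fst, T.push_sgn, hT.push_apply]
  have hκβ : push (bernCoupling a b) Prod.snd = push (R c').m β := by
    funext t
    rw [push_bernCoupling_snd, (R c').push_sgn]
    rfl
  obtain ⟨G, hG₁, hG₂, hGκ⟩ := exists_glue T (R c') α β hκ hκα hκβ
  refine ⟨_, hT.map_overwrite G hG₁ hG₂, le_of_eq ?_⟩
  calc 1 - |a - b| = ∑ st, (if st.1 = st.2 then push G.m (Prod.map α β) st else 0) := by
        rw [hGκ, sum_diag_sgn, bernCoupling_diag]
    _ = ∑ fg, if α fg.1 = β fg.2 then G.m fg else 0 := sum_ite_push _ _ _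
    _ = _ := by
        rw [prAgree, FDist.map, sum_ite_push]
        refine sum_congr rfl fun fg _ => ?_
        have e₁ : overwrite pre c' fg.1 fg.2 ⟨(q, c), h⟩ = α fg.1 :=
          congrFun (restr_overwrite_of_ne hcc fg.1 fg.2) ⟨q, h⟩
        have e₂ : overwrite pre c' fg.1 fg.2 ⟨(q, c'), h'⟩ = β fg.2 :=
          congrFun (restr_overwrite_self c' fg.1 fg.2) ⟨q, h'⟩
        rw [e₁, e₂]

end System

section Consistified

variable {Q C : Type} [DecidableEq Q] [DecidableEq C]

section Maps

variable (pre : Q → C → Bool)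

def toNew (f : Glob pre → Sgn) : Glob (consPre pre) → Sgn := fun z => f z.1.1

def toOld (f : Glob (consPre pre) → Sgn) : Glob pre → Sgn :=
  fun x => f ⟨(x, Sum.inl x.1.2), by simp [consPre]⟩

def restrConn (q : Q) (f : Glob pre → Sgn) : {x : Glob pre // consPre pre x (Sum.inr q)} → Sgn :=
  fun x => f x.1

def unrelabel (c : C) (g : {x : Glob pre // consPre pre x (Sum.inl c)} → Sgn) :
    {q : Q // pre q c} → Sgn :=
  fun y => g ⟨⟨(y.1, c), y.2⟩, by simp [consPre]⟩

end Maps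

variable {pre : Q → C → Bool}

lemma exists_connElem_eq {q : Q} (x : {x : Glob pre // consPre pre x (Sum.inr q)}) :
    ∃ c h, connElem pre q c h = x := by
  obtain ⟨⟨⟨q', c⟩, h⟩, hq⟩ := x
  obtain rfl : q' = q := by simpa [consPre] using hq
  exact ⟨c, h, rfl⟩

variable [Fintype Q] [Fintype C] {R : (c : C) → FDist ({q : Q // pre q c} → Sgn)}
  {R' : (d : C ⊕ Q) → FDist ({x : Glob pre // consPre pre x d} → Sgn)}

variable (pre R) in
def IsConnCoupling (q : Q) (W : FDist ({x : Glob pre // consPre pre x (Sum.inr q)} → Sgn)) :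
    Prop :=
  ∀ x, push W.m (fun g => g x) = marg pre R x.1.1.2 q (preOfConn pre q x)

lemma agree_map_restrConn (T : FDist (Glob pre → Sgn)) {q : Q} {c c' : C} (h : pre q c)
    (h' : pre q c') :
    agree (T.map (restrConn pre q)).m (connElem pre q c h) (connElem pre q c' h') =
      prAgree pre T q c c' h h' :=
  sum_ite_push _ _ _

lemma IsCoupling.isConnCoupling_map_restrConn {T : FDist (Glob pre → Sgn)}
    (hT : IsCoupling pre R T) (q : Q) : IsConnCoupling pre R q (T.map (restrConn pre q)) := by
  intro x
  obtain ⟨c, h, rfl⟩ := exists_connElem_eq x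
  rw [FDist.map, push_comp]
  exact hT.push_apply h

/-- The restriction of a multimaximally connected coupling to a connection is comonotone, and so
is every multimaximal coupling of that connection; comonotone laws are unique. -/
lemma MultimaxConn.push_restrConn_eq {T : FDist (Glob pre → Sgn)} (hT : MultimaxConn pre R T)
    {q : Q} {W₀ : FDist ({x : Glob pre // consPre pre x (Sum.inr q)} → Sgn)}
    (hW₀ : IsConnCoupling pre R q W₀)
    (hmax : ∀ (c c' : C) (h : pre q c) (h' : pre q c') W, IsConnCoupling pre R q W →
      agree W.m (connElem pre q c h) (connElem pre q c' h') ≤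
        agree W₀.m (connElem pre q c h) (connElem pre q c' h')) :
    push T.m (restrConn pre q) = W₀.m := by
  set W := T.map (restrConn pre q)
  have hW : IsConnCoupling pre R q W := hT.1.isConnCoupling_map_restrConn q
  have hprob : probOne W.m = probOne W₀.m := funext fun x => by
    rw [probOne, probOne, hW x, hW₀ x]
  have hagree : ∀ i j, 1 - |probOne W.m i - probOne W.m j| ≤ agree W.m i j := by
    intro i j
    obtain ⟨c, h, rfl⟩ := exists_connElem_eq i
    obtain ⟨c', h', rfl⟩ := exists_connElem_eq j
    obtain ⟨T₂, hT₂, hle⟩ := hT.1.exists_le_prAgree h h'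
    rw [probOne, probOne, hW, hW, agree_map_restrConn]
    exact hle.trans (hT.2 q c c' h h' T₂ hT₂)
  have hagree₀ : ∀ i j, 1 - |probOne W₀.m i - probOne W₀.m j| ≤ agree W₀.m i j := by
    intro i j
    obtain ⟨c, h, rfl⟩ := exists_connElem_eq i
    obtain ⟨c', h', rfl⟩ := exists_connElem_eq j
    rw [← hprob]
    exact (hagree _ _).trans (hmax c c' h h' _ hW)
  exact (isComonotone_of_le_agree W hagree).ext (isComonotone_of_le_agree W₀ hagree₀) hprob

lemma isCoupling_map_toNew (hC : ∀ c : C, (R' (Sum.inl c)).m = push (R c).m (relabel pre c))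
    {T : FDist (Glob pre → Sgn)} (hT : IsCoupling pre R T)
    (hconn : ∀ q, push T.m (restrConn pre q) = (R' (Sum.inr q)).m) :
    IsCoupling (consPre pre) R' (T.map (toNew pre)) := by
  rintro (c | q)
  · have hres : restr (consPre pre) (Sum.inl c) ∘ toNew pre = relabel pre c ∘ restr pre c := by
      funext f x
      have hx : x.1.1.2 = c := by simpa [consPre] using x.2
      exact congrArg f (Subtype.ext (Prod.ext rfl hx))
    rw [FDist.map, push_comp, hres, ← push_comp, hT c, hC c]
  · exact (push_comp _ _ _).trans (hconn q)

lemma idConn_map_toNew (T : FDist (Glob pre → Sgn)) :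
    IdConn (consPre pre) (T.map (toNew pre)) := by
  intro x d d' hd hd'
  rw [prAgree, FDist.map, sum_ite_push]
  simpa [toNew] using T.total

lemma IsCoupling.isCoupling_map_toOld
    (hC : ∀ c : C, (R' (Sum.inl c)).m = push (R c).m (relabel pre c))
    {T' : FDist (Glob (consPre pre) → Sgn)} (hT' : IsCoupling (consPre pre) R' T') :
    IsCoupling pre R (T'.map (toOld pre)) := by
  intro c
  have hres : restr pre c ∘ toOld pre = unrelabel pre c ∘ restr (consPre pre) (Sum.inl c) := rfl
  rw [FDist.map, push_comp, hres, ← push_comp, hT' (Sum.inl c), hC c, push_comp]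
  exact push_id _

/-- Under an identically connected coupling the copy of `(q, c)` in context `c` equals the one in
context `q`. -/
lemma IdConn.prAgree_map_toOld {T' : FDist (Glob (consPre pre) → Sgn)}
    (hT'i : IdConn (consPre pre) T') (hT'c : IsCoupling (consPre pre) R' T') {q : Q} {c c' : C}
    (h : pre q c) (h' : pre q c') :
    prAgree pre (T'.map (toOld pre)) q c c' h h' =
      agree (R' (Sum.inr q)).m (connElem pre q c h) (connElem pre q c' h') := by
  rw [prAgree, FDist.map, sum_ite_push, agree, ← hT'c (Sum.inr q), sum_ite_push]
  refine sum_congr rfl fun f _ => ?_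
  by_cases hf : T'.m f = 0
  · simp [hf]
  have hq : ∀ {c} (h : pre q c), consPre pre ⟨(q, c), h⟩ (Sum.inr q) := by simp [consPre]
  rw [toOld, toOld, hT'i.apply_eq hf _ (hq h), hT'i.apply_eq hf _ (hq h')]
  rfl

end Consistified

/-- A system R has a multimaximally connected coupling iff its consistification R‡ has
an identically connected coupling: R is noncontextual in the CbD sense iff R‡ is
noncontextual. In R‡ the contents are the measured pairs of R and the contexts are
C ⊔ Q; the bunch of a new context inl c is the bunch of c relabeled, and the bunch of
a new context inr q is the (unique) multimaximal coupling T_q of the connection of q: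
a distribution with the connection's marginals maximizing every pairwise agreement
probability among couplings of the connection. -/
theorem stmt12 {Q C : Type} [Fintype Q] [Fintype C] [DecidableEq Q] [DecidableEq C]
    (pre : Q → C → Bool) (R : (c : C) → FDist ({q : Q // pre q c} → Sgn))
    (R' : (d : C ⊕ Q) → FDist ({x : Glob pre // consPre pre x d} → Sgn))
    (hC : ∀ c : C, (R' (Sum.inl c)).m = push (R c).m (relabel pre c))
    (hconn : ∀ (q : Q) (x : {x : Glob pre // consPre pre x (Sum.inr q)}),
      push (R' (Sum.inr q)).m (fun g => g x) = marg pre R x.1.1.2 q (preOfConn pre q x))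
    (hmm : ∀ (q : Q) (c c' : C) (h : pre q c) (h' : pre q c')
        (W : FDist ({x : Glob pre // consPre pre x (Sum.inr q)} → Sgn)),
      (∀ x, push W.m (fun g => g x) = marg pre R x.1.1.2 q (preOfConn pre q x)) →
      (∑ g : {x : Glob pre // consPre pre x (Sum.inr q)} → Sgn,
          if g (connElem pre q c h) = g (connElem pre q c' h') then W.m g else 0)
      ≤ ∑ g : {x : Glob pre // consPre pre x (Sum.inr q)} → Sgn,
          if g (connElem pre q c h) = g (connElem pre q c' h')
          then (R' (Sum.inr q)).m g else 0) :
    (∃ T : FDist (Glob pre → Sgn), MultimaxConn pre R T) ↔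
    (∃ T' : FDist (Glob (consPre pre) → Sgn),
      IsCoupling (consPre pre) R' T' ∧ IdConn (consPre pre) T') := by
  constructor
  · rintro ⟨T, hT⟩
    refine ⟨T.map (toNew pre), isCoupling_map_toNew hC hT.1 fun q => ?_, idConn_map_toNew T⟩
    exact hT.push_restrConn_eq (hconn q) (hmm q)
  · rintro ⟨T', hT'c, hT'i⟩
    refine ⟨T'.map (toOld pre), hT'c.isCoupling_map_toOld hC, fun q c c' h h' T'' hT'' => ?_⟩
    calc prAgree pre T'' q c c' h h'
        = agree (T''.map (restrConn pre q)).m (connElem pre q c h) (connElem pre q c' h') :=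
          (agree_map_restrConn T'' h h').symm
      _ ≤ agree (R' (Sum.inr q)).m (connElem pre q c h) (connElem pre q c' h') :=
          hmm q c c' h h' (T''.map (restrConn pre q)) (hT''.isConnCoupling_map_restrConn q)
      _ = prAgree pre (T'.map (toOld pre)) q c c' h h' := (hT'i.prAgree_map_toOld hT'c h h').symm
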